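/- (Identity for the reversed first-passage matrices.) Assume the environment chain is stationary with distribution π. Then for all integers 1 ≤ m ≤ n, π · ( Λ^{*n}(n−m) − Σ_{k=m}^{n} Λ^{*(n−k)}(n−k) · V(k, m) ) · e = 0; equivalently, π·Λ^{*n}(n−m)·e = Σ_{k=m}^{n} π·Λ^{*(n−k)}(n−k)·V(k,m)·e. -/

import Mathlib

/-!
The identity already holds between the matrices, before multiplying by `π` and `e`. Since the
surplus `X_k = k - S_k` rises by at most one per step, a path with `X_n = m` first reaches
level `m` at some time `k ∈ [m, n]`, exactly at level `m`, and then collects `n - k` in claims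
over the last `n - k` steps. First-step analysis turns this into the decomposition
`Λ^{*n}(n-m) = ∑_{k=m}^{n} M(k,m) Λ^{*(n-k)}(n-k)`, where `M(k,m)` are the first-passage
matrices; it holds for any jump matrices. Apply it to the reversed model and transport it back
along `A ↦ Δ_π⁻¹ Aᵀ Δ_π`, an anti-multiplicative involution sending `Λ̃^{*r}(c)` to `Λ^{*r}(c)`
and `M̃(k,m)` to `V(k,m)`.
-/

open scoped BigOperators

noncomputable section

namespace CMB

/-- The weight that the compound Markov binomial model with horizon `n`, jump matrices `Λ`
and initial distribution `μ` assigns to the path `(J, C)`. -/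
def pathWeight {N : ℕ} (Λ : ℕ → Matrix (Fin N) (Fin N) ℝ) (μ : Fin N → ℝ) (n : ℕ)
    (J : Fin (n + 1) → Fin N) (C : Fin n → ℕ) : ℝ :=
  μ (J 0) * ∏ k : Fin n, Λ (C k) (J k.castSucc) (J k.succ)

/-- The probability of the event `A` in the horizon-`n` compound Markov binomial model:
the sum of the weights of the paths belonging to the event. -/
def prob {N : ℕ} (Λ : ℕ → Matrix (Fin N) (Fin N) ℝ) (μ : Fin N → ℝ) (n : ℕ)
    (A : (Fin (n + 1) → Fin N) → (Fin n → ℕ) → Prop) : ℝ :=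
  ∑' p : { p : (Fin (n + 1) → Fin N) × (Fin n → ℕ) // A p.1 p.2 },
    pathWeight Λ μ n p.1.1 p.1.2

/-- Partial sums `S_k = C_1 + ⋯ + C_k` of the claims (`C i` is claim number `i+1`). -/
def S {n : ℕ} (C : Fin n → ℕ) (k : ℕ) : ℕ :=
  ∑ j : Fin n, if (j : ℕ) < k then C j else 0

/-- Dirac initial distribution `δ_i`. -/
def delta {N : ℕ} (i : Fin N) : Fin N → ℝ := fun i' => if i' = i then 1 else 0

/-- `hitM Λ n a i j` is the probability, in the model with initial distribution `δ_i` and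
initial surplus `x = 0` (so `X_k = k - S_k`), of the event `{τ_a^+ = n, J_n = j}`,
i.e. `X_k < a` for all `k < n` and `X_n ≥ a` and `J_n = j`. -/
def hitM {N : ℕ} (Λ : ℕ → Matrix (Fin N) (Fin N) ℝ) (n a : ℕ) : Matrix (Fin N) (Fin N) ℝ :=
  fun i j => prob Λ (delta i) n fun J C =>
    (∀ k, k < n → (k : ℤ) - S C k < (a : ℤ)) ∧ (a : ℤ) ≤ (n : ℤ) - S C n ∧ J (Fin.last n) = j

/-- `conv Λ n` is the `n`-fold matrix convolution `Λ^{*n}`. -/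
def conv {N : ℕ} (Λ : ℕ → Matrix (Fin N) (Fin N) ℝ) : ℕ → ℕ → Matrix (Fin N) (Fin N) ℝ
  | 0, m => if m = 0 then 1 else 0
  | n + 1, m => ∑ k ∈ Finset.range (m + 1), conv Λ n k * Λ (m - k)

/-- Jump matrices `Λ̃(m)`, with `λ̃_{ij}(m) = (π_j/π_i)·λ_{ji}(m)`, of the time-reversed model. -/
def lamTilde {N : ℕ} (Λ : ℕ → Matrix (Fin N) (Fin N) ℝ) (π : Fin N → ℝ) :
    ℕ → Matrix (Fin N) (Fin N) ℝ := fun m i j => π j / π i * Λ m j i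

/-- `V(n,a) := Δ_π⁻¹ · M̃(n,a)ᵀ · Δ_π`, where `M̃(n,a)` is the matrix of first-passage
probabilities of the time-reversed model. -/
def Vmat {N : ℕ} (Λ : ℕ → Matrix (Fin N) (Fin N) ℝ) (π : Fin N → ℝ) (n a : ℕ) :
    Matrix (Fin N) (Fin N) ℝ := fun i j => π j / π i * hitM (lamTilde Λ π) n a j i

section Reversal

variable {N : ℕ}

/-- The adjoint `Δ_π⁻¹ Aᵀ Δ_π` of `A` for the inner product `⟨x, y⟩_π = ∑ i, π i * x i * y i`. -/
def weightedAdjoint (π : Fin N → ℝ) (A : Matrix (Fin N) (Fin N) ℝ) : Matrix (Fin N) (Fin N) ℝ :=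
  fun i j => π j / π i * A j i

lemma lamTilde_eq_weightedAdjoint (Λ : ℕ → Matrix (Fin N) (Fin N) ℝ) (π : Fin N → ℝ) (c : ℕ) :
    lamTilde Λ π c = weightedAdjoint π (Λ c) := rfl

lemma Vmat_eq_weightedAdjoint (Λ : ℕ → Matrix (Fin N) (Fin N) ℝ) (π : Fin N → ℝ) (n a : ℕ) :
    Vmat Λ π n a = weightedAdjoint π (hitM (lamTilde Λ π) n a) := rfl

variable {π : Fin N → ℝ}

@[simp]
lemma weightedAdjoint_zero : weightedAdjoint π 0 = 0 := by
  ext; simp [weightedAdjoint]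

lemma weightedAdjoint_sum {ι : Type*} (s : Finset ι) (A : ι → Matrix (Fin N) (Fin N) ℝ) :
    weightedAdjoint π (∑ k ∈ s, A k) = ∑ k ∈ s, weightedAdjoint π (A k) := by
  ext; simp [weightedAdjoint, Matrix.sum_apply, Finset.mul_sum]

lemma weightedAdjoint_one (hπ : ∀ i, π i ≠ 0) : weightedAdjoint π 1 = 1 := by
  ext i j
  by_cases h : i = j
  · subst h; simp [weightedAdjoint, hπ]
  · simp [weightedAdjoint, Matrix.one_apply_ne h, Matrix.one_apply_ne (Ne.symm h)]

lemma weightedAdjoint_mul (hπ : ∀ i, π i ≠ 0) (A B : Matrix (Fin N) (Fin N) ℝ) :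
    weightedAdjoint π (A * B) = weightedAdjoint π B * weightedAdjoint π A := by
  ext i j
  simp only [weightedAdjoint, Matrix.mul_apply, Finset.mul_sum]
  refine Finset.sum_congr rfl fun l _ => ?_
  field_simp [hπ l]

lemma weightedAdjoint_weightedAdjoint (hπ : ∀ i, π i ≠ 0) (A : Matrix (Fin N) (Fin N) ℝ) :
    weightedAdjoint π (weightedAdjoint π A) = A := by
  ext i j
  simp only [weightedAdjoint]
  field_simp [hπ i, hπ j]

end Reversal

section Convolution

variable {N : ℕ} (Λ : ℕ → Matrix (Fin N) (Fin N) ℝ)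

lemma conv_eq_coeff_pow (n c : ℕ) :
    conv Λ n c = PowerSeries.coeff c (PowerSeries.mk Λ ^ n) := by
  induction n generalizing c with
  | zero => simp [conv]
  | succ n ih =>
    rw [pow_succ, PowerSeries.coeff_mul, Finset.Nat.sum_antidiagonal_eq_sum_range_succ_mk]
    simp [conv, ih]

lemma conv_succ_left (n c : ℕ) :
    conv Λ (n + 1) c = ∑ d ∈ Finset.range (c + 1), Λ d * conv Λ n (c - d) := by
  simp only [conv_eq_coeff_pow, pow_succ', PowerSeries.coeff_mul, PowerSeries.coeff_mk,
    Finset.Nat.sum_antidiagonal_eq_sum_range_succ_mk]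

lemma conv_lamTilde {π : Fin N → ℝ} (hπ : ∀ i, π i ≠ 0) (n c : ℕ) :
    conv (lamTilde Λ π) n c = weightedAdjoint π (conv Λ n c) := by
  induction n generalizing c with
  | zero => simp only [conv]; split_ifs <;> simp [weightedAdjoint_one hπ]
  | succ n ih =>
    rw [conv_succ_left Λ, weightedAdjoint_sum, conv, ← Finset.sum_range_reflect]
    refine Finset.sum_congr rfl fun d hd => ?_
    have hdc : d ≤ c := Nat.lt_succ_iff.mp (Finset.mem_range.mp hd)
    rw [weightedAdjoint_mul hπ, ← ih, Nat.add_sub_cancel, Nat.sub_sub_self hdc,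
      lamTilde_eq_weightedAdjoint]

end Convolution

lemma sum_piFinset_fin_succ {α M : Type*} [AddCommMonoid M] {n : ℕ} (s : Finset α)
    (g : (Fin (n + 1) → α) → M) :
    ∑ C ∈ Fintype.piFinset (fun _ => s), g C =
      ∑ c ∈ s, ∑ C ∈ Fintype.piFinset (fun _ => s), g (Fin.cons c C) := by
  have : Fintype.piFinset (fun _ : Fin (n + 1) => s) =
      (s ×ˢ Fintype.piFinset fun _ : Fin n => s).map (Fin.consEquiv fun _ => α).toEmbedding := by
    ext C
    simp [Fin.forall_fin_succ, Fin.tail]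
  rw [this, Finset.sum_map, ← Finset.sum_product']
  rfl

lemma sum_fun_fin_succ {α M : Type*} [Fintype α] [AddCommMonoid M] {n : ℕ}
    (g : (Fin (n + 1) → α) → M) : ∑ J, g J = ∑ x, ∑ J, g (Fin.cons x J) := by
  rw [← Fintype.sum_prod_type']
  exact ((Fin.consEquiv fun _ => α).sum_comp g).symm

section Paths

variable {N : ℕ} (Λ : ℕ → Matrix (Fin N) (Fin N) ℝ)

lemma pathWeight_cons (μ : Fin N → ℝ) {n : ℕ} (x : Fin N) (J : Fin (n + 1) → Fin N) (c : ℕ)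
    (C : Fin n → ℕ) :
    pathWeight Λ μ (n + 1) (Fin.cons x J) (Fin.cons c C) = μ x * pathWeight Λ (Λ c x) n J C := by
  simp [pathWeight, Fin.prod_univ_succ]

lemma sum_mul_pathWeight_delta (μ : Fin N → ℝ) {n : ℕ} (J : Fin (n + 1) → Fin N)
    (C : Fin n → ℕ) : ∑ l, μ l * pathWeight Λ (delta l) n J C = pathWeight Λ μ n J C := by
  simp [pathWeight, delta]

lemma prob_eq_zero_of_forall_not {μ : Fin N → ℝ} {n : ℕ}
    {A : (Fin (n + 1) → Fin N) → (Fin n → ℕ) → Prop} (hA : ∀ J C, ¬ A J C) : prob Λ μ n A = 0 := by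
  have : IsEmpty { p : (Fin (n + 1) → Fin N) × (Fin n → ℕ) // A p.1 p.2 } :=
    ⟨fun p => hA _ _ p.2⟩
  exact tsum_empty

open Classical in
lemma prob_eq_sum (μ : Fin N → ℝ) {n R : ℕ} {A : (Fin (n + 1) → Fin N) → (Fin n → ℕ) → Prop}
    (hA : ∀ J C, A J C → ∀ t, C t < R) :
    prob Λ μ n A = ∑ J, ∑ C ∈ Fintype.piFinset fun _ => Finset.range R,
      if A J C then pathWeight Λ μ n J C else 0 := by
  refine (tsum_subtype {p : _ × _ | A p.1 p.2} fun p => pathWeight Λ μ n p.1 p.2).trans ?_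
  rw [tsum_eq_sum (s := Finset.univ ×ˢ Fintype.piFinset fun _ => Finset.range R),
    Finset.sum_product]
  · simp only [Set.indicator_apply, Set.mem_ofPred_eq]
  · intro p hp
    have : ¬ A p.1 p.2 := fun h => hp (by simpa using hA _ _ h)
    simp [this]

lemma prob_succ (μ : Fin N → ℝ) {n R : ℕ}
    {A : (Fin (n + 2) → Fin N) → (Fin (n + 1) → ℕ) → Prop} (hA : ∀ J C, A J C → ∀ t, C t < R) :
    prob Λ μ (n + 1) A = ∑ x, μ x * ∑ c ∈ Finset.range R,
      prob Λ (Λ c x) n fun J C => A (Fin.cons x J) (Fin.cons c C) := by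
  classical
  have hA' : ∀ x c J C, A (Fin.cons x J) (Fin.cons c C) → ∀ t, C t < R := fun x c J C h t => by
    simpa using hA _ _ h t.succ
  rw [prob_eq_sum Λ _ hA, sum_fun_fin_succ]
  simp only [prob_eq_sum Λ _ (hA' _ _), sum_piFinset_fin_succ,
    pathWeight_cons, Finset.mul_sum, mul_ite, mul_zero]
  exact Finset.sum_congr rfl fun x _ => Finset.sum_comm

lemma sum_mul_prob_delta (μ : Fin N → ℝ) {n R : ℕ}
    {A : (Fin (n + 1) → Fin N) → (Fin n → ℕ) → Prop} (hA : ∀ J C, A J C → ∀ t, C t < R) :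
    ∑ l, μ l * prob Λ (delta l) n A = prob Λ μ n A := by
  classical
  simp only [prob_eq_sum Λ _ hA, Finset.mul_sum]
  rw [Finset.sum_comm]
  refine Finset.sum_congr rfl fun J _ => ?_
  rw [Finset.sum_comm]
  refine Finset.sum_congr rfl fun C _ => ?_
  split_ifs
  · exact sum_mul_pathWeight_delta Λ μ J C
  · simp

end Paths

section FirstPassage

lemma S_zero {n : ℕ} (C : Fin n → ℕ) : S C 0 = 0 := by simp [S]

lemma S_cons {n : ℕ} (c : ℕ) (C : Fin n → ℕ) (t : ℕ) :
    S (Fin.cons c C) (t + 1) = c + S C t := by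
  simp [S, Fin.sum_univ_succ]

lemma le_S {n : ℕ} (C : Fin n → ℕ) (t : Fin n) : C t ≤ S C n := by
  simpa [S] using Finset.single_le_sum (fun j _ => Nat.zero_le (C j)) (Finset.mem_univ t)

variable {N : ℕ}

def hitEvent (n a : ℕ) (j : Fin N) (J : Fin (n + 1) → Fin N) (C : Fin n → ℕ) : Prop :=
  (∀ k, k < n → (k : ℤ) - S C k < (a : ℤ)) ∧ (a : ℤ) ≤ (n : ℤ) - S C n ∧ J (Fin.last n) = j

lemma hitEvent.claim_add_le {n a : ℕ} {j : Fin N} {J : Fin (n + 1) → Fin N} {C : Fin n → ℕ}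
    (h : hitEvent n a j J C) (t : Fin n) : C t + a ≤ n := by
  have := le_S C t
  have := h.2.1
  omega

lemma hitEvent_cons_iff {k a : ℕ} (j x : Fin N) (J : Fin (k + 1) → Fin N) (c : ℕ)
    (C : Fin k → ℕ) :
    hitEvent (k + 1) (a + 1) j (Fin.cons x J) (Fin.cons c C) ↔ hitEvent k (a + c) j J C := by
  have hlast : (Fin.cons x J : Fin (k + 2) → Fin N) (Fin.last (k + 1)) = J (Fin.last k) := by
    rw [← Fin.succ_last, Fin.cons_succ]
  simp only [hitEvent, hlast, Nat.forall_lt_succ_left', S_zero, S_cons]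
  push_cast
  constructor
  · rintro ⟨⟨-, h⟩, h', rfl⟩
    exact ⟨fun t ht => by linarith [h t ht], by linarith, rfl⟩
  · rintro ⟨h, h', rfl⟩
    exact ⟨⟨by omega, fun t ht => by linarith [h t ht]⟩, by linarith, rfl⟩

variable (Λ : ℕ → Matrix (Fin N) (Fin N) ℝ)

lemma hitM_apply (n a : ℕ) (i j : Fin N) :
    hitM Λ n a i j = prob Λ (delta i) n (hitEvent n a j) := rfl

lemma hitM_of_lt {k a : ℕ} (h : k < a) : hitM Λ k a = 0 := by
  ext i j
  refine prob_eq_zero_of_forall_not Λ fun J C hJC => ?_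
  have := hJC.2.1
  omega

lemma hitM_succ_zero (k : ℕ) : hitM Λ (k + 1) 0 = 0 := by
  ext i j
  refine prob_eq_zero_of_forall_not Λ fun J C hJC => ?_
  have := hJC.1 0 k.succ_pos
  simp [S_zero] at this

lemma hitM_zero_zero : hitM Λ 0 0 = 1 := by
  ext i j
  rw [hitM_apply, prob_eq_sum Λ _ (R := 0) (by simp),
    ← (Equiv.funUnique (Fin 1) (Fin N)).symm.sum_comp]
  simp [hitEvent, pathWeight, S_zero, delta, Matrix.one_apply, eq_comm]

lemma hitM_succ {k R : ℕ} (hR : k < R) (a : ℕ) :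
    hitM Λ (k + 1) (a + 1) = ∑ c ∈ Finset.range R, Λ c * hitM Λ k (a + c) := by
  ext i j
  simp only [hitM_apply, Matrix.sum_apply, Matrix.mul_apply]
  rw [prob_succ Λ _ (R := R) fun J C h t => by have := h.claim_add_le t; omega]
  simp only [hitEvent_cons_iff, delta, ite_mul, one_mul, zero_mul, Finset.sum_ite_eq',
    Finset.mem_univ, if_true]
  refine Finset.sum_congr rfl fun c _ =>
    (sum_mul_prob_delta Λ _ (R := k + 1) fun J C h t => ?_).symm
  have := h.claim_add_le t
  omega

lemma conv_eq_sum_range_hitM_mul_conv (n m : ℕ) (hmn : m ≤ n) :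
    conv Λ n (n - m) = ∑ k ∈ Finset.range (n + 1), hitM Λ k m * conv Λ (n - k) (n - k) := by
  induction n generalizing m with
  | zero =>
    obtain rfl : m = 0 := Nat.le_zero.mp hmn
    simp [hitM_zero_zero]
  | succ n ih =>
    cases m with
    | zero => simp [Finset.sum_range_succ', hitM_succ_zero, hitM_zero_zero]
    | succ m =>
      calc conv Λ (n + 1) (n + 1 - (m + 1))
          = ∑ c ∈ Finset.range (n - m + 1), Λ c * conv Λ n (n - (m + c)) := by
            rw [Nat.add_sub_add_right, conv_succ_left]; simp only [Nat.sub_add_eq]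
        _ = ∑ c ∈ Finset.range (n - m + 1), Λ c *
              ∑ k ∈ Finset.range (n + 1), hitM Λ k (m + c) * conv Λ (n - k) (n - k) :=
            Finset.sum_congr rfl fun c hc => by
              rw [ih (m + c) (by simp at hc; omega)]
        _ = ∑ c ∈ Finset.range (n + 1), Λ c *
              ∑ k ∈ Finset.range (n + 1), hitM Λ k (m + c) * conv Λ (n - k) (n - k) := by
            refine Finset.sum_subset (Finset.range_subset_range.mpr (by omega)) fun c _ hc => ?_
            rw [Finset.sum_eq_zero fun k hk => ?_, Matrix.mul_zero]
            simp only [Finset.mem_range] at hc hk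
            rw [hitM_of_lt Λ (by omega), Matrix.zero_mul]
        _ = ∑ k ∈ Finset.range (n + 1), hitM Λ (k + 1) (m + 1) * conv Λ (n - k) (n - k) := by
            simp only [Finset.mul_sum, ← mul_assoc]
            rw [Finset.sum_comm]
            refine Finset.sum_congr rfl fun k hk => ?_
            rw [hitM_succ Λ (Finset.mem_range.mp hk), Finset.sum_mul]
        _ = ∑ k ∈ Finset.range (n + 2), hitM Λ k (m + 1) * conv Λ (n + 1 - k) (n + 1 - k) := by
            simp [Finset.sum_range_succ' _ (n + 1), hitM_of_lt Λ m.succ_pos]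

lemma conv_eq_sum_hitM_mul_conv {m n : ℕ} (hmn : m ≤ n) :
    conv Λ n (n - m) = ∑ k ∈ Finset.Icc m n, hitM Λ k m * conv Λ (n - k) (n - k) := by
  rw [conv_eq_sum_range_hitM_mul_conv Λ n m hmn]
  refine (Finset.sum_subset (fun k hk => ?_) fun k hk hk' => ?_).symm
  · simp only [Finset.mem_Icc, Finset.mem_range] at hk ⊢
    omega
  · simp only [Finset.mem_Icc, Finset.mem_range, not_and, not_le] at hk hk'
    rw [hitM_of_lt Λ (by omega), Matrix.zero_mul]

end FirstPassage

lemma conv_eq_sum_conv_mul_Vmat {N : ℕ} (Λ : ℕ → Matrix (Fin N) (Fin N) ℝ) {π : Fin N → ℝ}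
    (hπ : ∀ i, π i ≠ 0) {m n : ℕ} (hmn : m ≤ n) :
    conv Λ n (n - m) = ∑ k ∈ Finset.Icc m n, conv Λ (n - k) (n - k) * Vmat Λ π k m := by
  have hconv : ∀ r c, conv Λ r c = weightedAdjoint π (conv (lamTilde Λ π) r c) := fun r c => by
    rw [conv_lamTilde Λ hπ, weightedAdjoint_weightedAdjoint hπ]
  rw [hconv, conv_eq_sum_hitM_mul_conv _ hmn, weightedAdjoint_sum]
  refine Finset.sum_congr rfl fun k _ => ?_
  rw [weightedAdjoint_mul hπ, ← hconv, Vmat_eq_weightedAdjoint]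

theorem reversed_first_passage_identity_general
    {N : ℕ}
    (Λ : ℕ → Matrix (Fin N) (Fin N) ℝ)
    (π : Fin N → ℝ) (hπpos : ∀ i, 0 < π i)
    (m n : ℕ) (hmn : m ≤ n) :
    ∑ i, ∑ j, π i *
      (conv Λ n (n - m) -
        ∑ k ∈ Finset.Icc m n, conv Λ (n - k) (n - k) * Vmat Λ π k m) i j = 0 := by
  rw [← conv_eq_sum_conv_mul_Vmat Λ (fun i => (hπpos i).ne') hmn]
  simp

/-- Identity for the reversed first-passage matrices.  Assume the
environment chain stationary with distribution `π`.  For `1 ≤ m ≤ n`,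
`π·(Λ^{*n}(n−m) − Σ_{k=m}^{n} Λ^{*(n−k)}(n−k)·V(k,m))·e = 0`. -/
theorem reversed_first_passage_identity
    {N : ℕ} (hN : 1 ≤ N)
    (Λ : ℕ → Matrix (Fin N) (Fin N) ℝ) (P : Matrix (Fin N) (Fin N) ℝ)
    (hΛ : ∀ m i j, 0 ≤ Λ m i j)
    (hP : ∀ i j, HasSum (fun m => Λ m i j) (P i j))
    (hPstoch : ∀ i, ∑ j, P i j = 1)
    (π : Fin N → ℝ) (hπpos : ∀ i, 0 < π i) (hπsum : ∑ i, π i = 1)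
    (hπP : ∀ j, ∑ i, π i * P i j = π j)
    (m n : ℕ) (hm : 1 ≤ m) (hmn : m ≤ n) :
    ∑ i, ∑ j, π i *
      (conv Λ n (n - m) -
        ∑ k ∈ Finset.Icc m n, conv Λ (n - k) (n - k) * Vmat Λ π k m) i j = 0 :=
  reversed_first_passage_identity_general Λ π hπpos m n hmn

end CMB
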